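/- arXiv:1811.09658 — 3 statements merged into one kernel-verified Lean document; each statement's English description precedes it below -/
import Mathlib

section
/- The stratum Y₃ consists of a single matrix: the only A ∈ SU(4) with d(A) = 3 is A = −I₄, where I₄ is the 4×4 identity matrix. -/
/-- The intersection of the `(-1)`-eigenspace of a `4 × 4` complex matrix `A` with the span
of the first three standard basis vectors: `{x ∈ ℂ⁴ : A·x = -x and x₃ = 0}`. -/
noncomputable def Espace (A : Matrix (Fin 4) (Fin 4) ℂ) : Submodule ℂ (Fin 4 → ℂ) :=
  LinearMap.ker (A.mulVecLin + LinearMap.id) ⊓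
    LinearMap.ker (LinearMap.proj (R := ℂ) (φ := fun _ : Fin 4 => ℂ) (3 : Fin 4))

/-- `d(A) = dim_ℂ E(A)`. -/
noncomputable def eigDim (A : Matrix (Fin 4) (Fin 4) ℂ) : ℕ :=
  Module.finrank ℂ (Espace A)

/-! If `d(A) = 3`, then `E(A)` is the whole hyperplane `x₃ = 0`, so `A eⱼ = -eⱼ` for `j < 3`.
Since the columns of a unitary matrix are orthonormal, the last column is orthogonal to
`e₀, e₁, e₂`, so `A = diag(-1, -1, -1, c)`, and `det A = -c = 1` forces `c = -1`. -/

open Matrix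

theorem LinearMap.finrank_ker_proj {K ι : Type*} [Field K] [Fintype ι] (i : ι) :
    Module.finrank K (LinearMap.ker (LinearMap.proj i : (ι → K) →ₗ[K] K)) =
      Fintype.card ι - 1 := by
  have hsurj : Function.Surjective (LinearMap.proj i : (ι → K) →ₗ[K] K) :=
    fun c => ⟨fun _ => c, rfl⟩
  have h := LinearMap.finrank_range_add_finrank_ker (LinearMap.proj i : (ι → K) →ₗ[K] K)
  rw [LinearMap.range_eq_top.mpr hsurj, finrank_top, Module.finrank_self,
    Module.finrank_fintype_fun_eq_card] at h
  omega

namespace Matrix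

variable {n α : Type*} [Fintype n] [DecidableEq n] [CommRing α] [StarRing α]

theorem eq_diagonal_update_of_mem_unitaryGroup {U : Matrix n n α} (hU : U ∈ unitaryGroup n α)
    {k : n} (hcol : ∀ j ≠ k, U *ᵥ Pi.single j 1 = -Pi.single j 1) :
    U = diagonal (Function.update (-1) k (U k k)) := by
  have hcol' : ∀ j ≠ k, ∀ i, U i j = -(1 : Matrix n n α) i j := fun j hj i => by
    simpa [mulVec_single_one, one_apply, Pi.single_apply, eq_comm] using congrFun (hcol j hj) i
  -- column `k` is orthogonal to the columns `-eᵢ`, `i ≠ k`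
  have hk : ∀ i ≠ k, U i k = 0 := fun i hi => by
    have h := congrFun (congrFun (mem_unitaryGroup_iff'.mp hU) i) k
    simpa [mul_apply, hcol' i hi, one_apply, hi, apply_ite star] using h
  ext i j
  by_cases hj : j = k
  · subst hj
    by_cases hi : i = j
    · subst hi; simp
    · simp [hk i hi, hi]
  · rw [hcol' j hj, diagonal_apply, one_apply]
    split_ifs with hij
    · simp [hij, hj]
    · exact neg_zero

theorem eq_neg_one_of_mem_specialUnitaryGroup (hn : Even (Fintype.card n)) {U : Matrix n n α}
    (hU : U ∈ specialUnitaryGroup n α) {k : n}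
    (hcol : ∀ j ≠ k, U *ᵥ Pi.single j 1 = -Pi.single j 1) : U = -1 := by
  have hdiag := eq_diagonal_update_of_mem_unitaryGroup hU.1 hcol
  have hodd : Odd (Fintype.card n - 1) :=
    Nat.Even.sub_odd (Fintype.card_pos_iff.mpr ⟨k⟩) hn odd_one
  have hdet : U.det = -U k k := by
    rw [congrArg det hdiag, det_diagonal, Finset.prod_update_of_mem (Finset.mem_univ k)]
    simp [Finset.prod_const, Finset.card_univ_sdiff, hodd.neg_one_pow]
  have hkk : U k k = -1 := by
    rw [← neg_neg (U k k), ← hdet, (mem_specialUnitaryGroup_iff.mp hU).2]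
  rw [hdiag, hkk,
    show Function.update (-1 : n → α) k (-1) = -1 from Function.update_eq_self k _]
  exact (diagonal_neg 1).symm.trans (congrArg Neg.neg diagonal_one)

end Matrix

theorem mem_espace_iff {A : Matrix (Fin 4) (Fin 4) ℂ} {x : Fin 4 → ℂ} :
    x ∈ Espace A ↔ A *ᵥ x = -x ∧ x 3 = 0 := by
  simp [Espace, add_eq_zero_iff_eq_neg]

theorem eigDim_eq_three_iff (A : Matrix (Fin 4) (Fin 4) ℂ) :
    eigDim A = 3 ↔ Espace A = LinearMap.ker (LinearMap.proj 3) := by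
  have hrank :
      Module.finrank ℂ (LinearMap.ker (LinearMap.proj 3 : (Fin 4 → ℂ) →ₗ[ℂ] ℂ)) = 3 := by
    simp [LinearMap.finrank_ker_proj]
  exact ⟨fun h => Submodule.eq_of_le_of_finrank_eq inf_le_right (h.trans hrank.symm),
    fun h => by rw [eigDim, h, hrank]⟩

/-- The only `A ∈ SU(4)` with `d(A) = 3` is `A = -I₄`. -/
theorem stratum_three_eq_neg_one (A : Matrix.specialUnitaryGroup (Fin 4) ℂ) :
    eigDim (A : Matrix (Fin 4) (Fin 4) ℂ) = 3 ↔
      (A : Matrix (Fin 4) (Fin 4) ℂ) = -(1 : Matrix (Fin 4) (Fin 4) ℂ) := by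
  rw [eigDim_eq_three_iff]
  constructor
  · intro hE
    refine eq_neg_one_of_mem_specialUnitaryGroup (by decide) A.2 (k := 3) fun j hj => ?_
    have hmem : Pi.single j 1 ∈ Espace A := by
      rw [hE]
      simp [hj.symm]
    exact (mem_espace_iff.mp hmem).1
  · intro hA
    ext x
    simp [mem_espace_iff, hA, neg_mulVec]
end

section
/- The inclusion map Y₀ → SU(4) is homotopic, through continuous maps from Y₀ (with the subspace topology) to SU(4), to the constant map sending every point of Y₀ to the identity matrix; that is, Y₀ retracts to {Id} inside SU(4). -/
/-! For `A ∈ Y₀` and `t ∈ ℝ`, the first three columns of `(1 - t) A + t I` are linearly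
independent: if this matrix kills `v` with `v₃ = 0`, then `(1 - t) A v = -t v` and, `A` being
unitary, `(1 - t)² ‖v‖² = t² ‖v‖²`; so `v = 0`, or `t = 1/2` and `A v = -v`, i.e. `v ∈ E(A) = 0`.
Orthonormalizing these three columns by Gram–Schmidt and adjoining the unique fourth column that
makes the result special unitary is continuous on such matrices and fixes every matrix of `SU(4)`;
applied along the segment from `A` to `I`, it is the required homotopy. -/

open InnerProductSpace Finset

section GramSchmidt

variable {𝕜 E ι : Type*} [RCLike 𝕜] [NormedAddCommGroup E] [InnerProductSpace 𝕜 E]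
  [LinearOrder ι] [LocallyFiniteOrderBot ι] [WellFoundedLT ι]

theorem continuousOn_gramSchmidt (i : ι) :
    ContinuousOn (fun f : ι → E => gramSchmidt 𝕜 f i) {f | LinearIndependent 𝕜 f} := by
  induction i using WellFoundedLT.induction with
  | ind i ih =>
    have hf : ContinuousOn (fun f : ι → E => f i) {f | LinearIndependent 𝕜 f} :=
      (continuous_apply i).continuousOn
    have hsum : ContinuousOn (fun f : ι → E => ∑ j ∈ Iio i,
        (inner 𝕜 (gramSchmidt 𝕜 f j) (f i) / ((‖gramSchmidt 𝕜 f j‖ ^ 2 : ℝ) : 𝕜)) •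
          gramSchmidt 𝕜 f j) {f | LinearIndependent 𝕜 f} := by
      refine continuousOn_finsetSum _ fun j hj => ?_
      have hj := ih j (mem_Iio.mp hj)
      refine ((hj.inner hf).div (RCLike.continuous_ofReal.comp_continuousOn
        ((continuous_pow 2).comp_continuousOn hj.norm)) fun f hf => ?_).smul hj
      simpa using gramSchmidt_ne_zero j hf
    refine (hf.sub hsum).congr fun f _ => ?_
    simp only [gramSchmidt_def 𝕜 f i, Submodule.starProjection_singleton, Pi.sub_apply]

theorem continuousOn_gramSchmidtNormed (i : ι) :
    ContinuousOn (fun f : ι → E => gramSchmidtNormed 𝕜 f i) {f | LinearIndependent 𝕜 f} := by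
  have h := continuousOn_gramSchmidt (𝕜 := 𝕜) (E := E) i
  refine ((RCLike.continuous_ofReal.comp_continuousOn h.norm).inv₀ fun f hf => ?_).smul h
  simpa using gramSchmidt_ne_zero i hf

theorem gramSchmidtNormed_of_orthonormal {f : ι → E} (hf : Orthonormal 𝕜 f) :
    gramSchmidtNormed 𝕜 f = f := by
  ext i
  rw [gramSchmidtNormed, gramSchmidt_of_orthogonal 𝕜 fun i j hij => hf.2 hij, hf.1 i]
  simp

end GramSchmidt

namespace Matrix

variable {𝕜 : Type*} [RCLike 𝕜]

section Columns

variable {m n : Type*} [Fintype m]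

def cols (M : Matrix m n 𝕜) (j : n) : EuclideanSpace 𝕜 m := WithLp.toLp 2 (Mᵀ j)

theorem conjTranspose_mul_self_eq_gram (M : Matrix m n 𝕜) : Mᴴ * M = gram 𝕜 M.cols := by
  ext i j
  simp [cols, gram, mul_apply, EuclideanSpace.inner_toLp_toLp, dotProduct, mul_comm]

theorem mem_unitaryGroup_iff_orthonormal_cols [Fintype n] [DecidableEq n] {M : Matrix n n 𝕜} :
    M ∈ unitaryGroup n 𝕜 ↔ Orthonormal 𝕜 M.cols := by
  rw [mem_unitaryGroup_iff', star_eq_conjTranspose, conjTranspose_mul_self_eq_gram,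
    gram_eq_one_iff_orthonormal]

end Columns

theorem adjugate_eq_det_smul_conjTranspose {n : Type*} [Fintype n] [DecidableEq n]
    {U : Matrix n n 𝕜} (hU : U ∈ unitaryGroup n 𝕜) : adjugate U = U.det • Uᴴ := by
  calc adjugate U = adjugate U * (U * Uᴴ) := by
        rw [← star_eq_conjTranspose, mem_unitaryGroup_iff.mp hU, mul_one]
    _ = U.det • Uᴴ := by rw [← Matrix.mul_assoc, adjugate_mul, smul_one_mul]

variable {n : ℕ}

def initCols (M : Matrix (Fin (n + 1)) (Fin (n + 1)) 𝕜) (k : Fin n) :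
    EuclideanSpace 𝕜 (Fin (n + 1)) :=
  M.cols k.castSucc

/-- The conjugate of the last row of `adjugate A` is the vector `w` with
`det (A.updateCol (Fin.last n) x) = ⟪w, x⟫`, hence orthogonal to the other columns of `A`. -/
def completeLastCol (A : Matrix (Fin (n + 1)) (Fin (n + 1)) 𝕜) :
    Matrix (Fin (n + 1)) (Fin (n + 1)) 𝕜 :=
  A.updateCol (Fin.last n) (star (adjugate A (Fin.last n)))

theorem adjugate_updateCol_last_row (A : Matrix (Fin (n + 1)) (Fin (n + 1)) 𝕜)
    (x : Fin (n + 1) → 𝕜) :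
    adjugate (A.updateCol (Fin.last n) x) (Fin.last n) = adjugate A (Fin.last n) := by
  ext j
  simp only [adjugate_fin_succ_eq_det_submatrix, Fin.succAbove_last]
  congr 2
  ext k l
  simp

theorem completeLastCol_updateCol_last (A : Matrix (Fin (n + 1)) (Fin (n + 1)) 𝕜)
    (x : Fin (n + 1) → 𝕜) :
    completeLastCol (A.updateCol (Fin.last n) x) = completeLastCol A := by
  rw [completeLastCol, completeLastCol, adjugate_updateCol_last_row, updateCol_idem]

theorem completeLastCol_of_mem_unitaryGroup {U : Matrix (Fin (n + 1)) (Fin (n + 1)) 𝕜}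
    (hU : U ∈ unitaryGroup (Fin (n + 1)) 𝕜) :
    completeLastCol U = U * diagonal (Function.update 1 (Fin.last n) (star U.det)) := by
  ext i j
  rw [completeLastCol, adjugate_eq_det_smul_conjTranspose hU, mul_diagonal]
  rcases eq_or_ne j (Fin.last n) with rfl | hj
  · simp [mul_comm]
  · simp [hj]

theorem completeLastCol_mem_specialUnitaryGroup_of_mem_unitaryGroup
    {U : Matrix (Fin (n + 1)) (Fin (n + 1)) 𝕜} (hU : U ∈ unitaryGroup (Fin (n + 1)) 𝕜) :
    completeLastCol U ∈ specialUnitaryGroup (Fin (n + 1)) 𝕜 := by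
  have hdet := (det_of_mem_unitary hU).2
  rw [completeLastCol_of_mem_unitaryGroup hU, mem_specialUnitaryGroup_iff, det_mul,
    det_diagonal, Fin.prod_univ_castSucc]
  refine ⟨mul_mem hU ?_, by simpa [mul_comm] using hdet⟩
  rw [mem_unitaryGroup_iff', star_eq_conjTranspose, diagonal_conjTranspose, diagonal_mul_diagonal,
    ← diagonal_one]
  congr 1
  ext j
  rcases eq_or_ne j (Fin.last n) with rfl | hj
  · simpa [mul_comm] using hdet
  · simp [hj]

theorem completeLastCol_of_mem_specialUnitaryGroup {U : Matrix (Fin (n + 1)) (Fin (n + 1)) 𝕜}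
    (hU : U ∈ specialUnitaryGroup (Fin (n + 1)) 𝕜) : completeLastCol U = U := by
  rw [mem_specialUnitaryGroup_iff] at hU
  simp [completeLastCol_of_mem_unitaryGroup hU.1, hU.2]

theorem exists_updateCol_last_mem_unitaryGroup {A : Matrix (Fin (n + 1)) (Fin (n + 1)) 𝕜}
    (hA : Orthonormal 𝕜 A.initCols) :
    ∃ x, A.updateCol (Fin.last n) x ∈ unitaryGroup (Fin (n + 1)) 𝕜 := by
  have hs : Orthonormal 𝕜 (Set.domRestrict {j | j ≠ Fin.last n} A.cols) :=
    hA.comp (fun j : {j | j ≠ Fin.last n} => Fin.castPred j.1 j.2)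
      fun j k h => Subtype.ext (by simpa using h)
  obtain ⟨b, hb⟩ := hs.exists_orthonormalBasis_extension_of_card_eq (by simp)
  have hcols : (A.updateCol (Fin.last n) (WithLp.ofLp (b (Fin.last n)))).cols = b := by
    funext j
    rcases eq_or_ne j (Fin.last n) with rfl | hj
    · ext i; simp [cols]
    · rw [hb j hj]; ext i; simp [cols, hj]
  exact ⟨_, mem_unitaryGroup_iff_orthonormal_cols.mpr (hcols ▸ b.orthonormal)⟩

theorem completeLastCol_mem_specialUnitaryGroup {A : Matrix (Fin (n + 1)) (Fin (n + 1)) 𝕜}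
    (hA : Orthonormal 𝕜 A.initCols) :
    completeLastCol A ∈ specialUnitaryGroup (Fin (n + 1)) 𝕜 := by
  obtain ⟨x, hx⟩ := exists_updateCol_last_mem_unitaryGroup hA
  -- `completeLastCol` ignores the last column, so it can be read off a unitary completion
  rw [← completeLastCol_updateCol_last A x]
  exact completeLastCol_mem_specialUnitaryGroup_of_mem_unitaryGroup hx

def ofInitCols (q : Fin n → EuclideanSpace 𝕜 (Fin (n + 1))) :
    Matrix (Fin (n + 1)) (Fin (n + 1)) 𝕜 :=
  of fun i j => Fin.lastCases 0 (fun k => q k i) j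

@[simp]
theorem initCols_ofInitCols (q : Fin n → EuclideanSpace 𝕜 (Fin (n + 1))) :
    (ofInitCols q).initCols = q := by
  ext k i
  simp [initCols, cols, ofInitCols]

theorem ofInitCols_initCols (M : Matrix (Fin (n + 1)) (Fin (n + 1)) 𝕜) :
    ofInitCols M.initCols = M.updateCol (Fin.last n) 0 := by
  ext i j
  induction j using Fin.lastCases <;> simp [ofInitCols, initCols, cols]

theorem continuous_ofInitCols :
    Continuous (ofInitCols : (Fin n → EuclideanSpace 𝕜 (Fin (n + 1))) → _) := by
  refine continuous_matrix fun i j => ?_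
  induction j using Fin.lastCases <;> simp [ofInitCols] <;> fun_prop

theorem continuous_initCols :
    Continuous (initCols : Matrix (Fin (n + 1)) (Fin (n + 1)) 𝕜 → _) := by
  unfold initCols cols
  fun_prop

theorem continuous_completeLastCol :
    Continuous (completeLastCol : Matrix (Fin (n + 1)) (Fin (n + 1)) 𝕜 → _) :=
  continuous_id.matrix_updateCol _ <|
    continuous_star.comp <| (continuous_apply _).comp continuous_id.matrix_adjugate

noncomputable def gramSchmidtCompletion (M : Matrix (Fin (n + 1)) (Fin (n + 1)) 𝕜) :
    Matrix (Fin (n + 1)) (Fin (n + 1)) 𝕜 :=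
  completeLastCol (ofInitCols (gramSchmidtNormed 𝕜 M.initCols))

theorem gramSchmidtCompletion_mem_specialUnitaryGroup {M : Matrix (Fin (n + 1)) (Fin (n + 1)) 𝕜}
    (hM : LinearIndependent 𝕜 M.initCols) :
    gramSchmidtCompletion M ∈ specialUnitaryGroup (Fin (n + 1)) 𝕜 :=
  completeLastCol_mem_specialUnitaryGroup <| by
    simpa using gramSchmidtNormed_orthonormal hM

theorem gramSchmidtCompletion_of_mem_specialUnitaryGroup
    {M : Matrix (Fin (n + 1)) (Fin (n + 1)) 𝕜} (hM : M ∈ specialUnitaryGroup (Fin (n + 1)) 𝕜) :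
    gramSchmidtCompletion M = M := by
  have hcols := mem_unitaryGroup_iff_orthonormal_cols.mp (mem_specialUnitaryGroup_iff.mp hM).1
  have hinit : Orthonormal 𝕜 M.initCols := hcols.comp _ (Fin.castSucc_injective n)
  rw [gramSchmidtCompletion, gramSchmidtNormed_of_orthonormal hinit, ofInitCols_initCols,
    completeLastCol_updateCol_last, completeLastCol_of_mem_specialUnitaryGroup hM]

theorem continuousOn_gramSchmidtCompletion :
    ContinuousOn (gramSchmidtCompletion : Matrix (Fin (n + 1)) (Fin (n + 1)) 𝕜 → _)
      {M | LinearIndependent 𝕜 M.initCols} := by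
  have hgs : ContinuousOn (fun M : Matrix (Fin (n + 1)) (Fin (n + 1)) 𝕜 =>
      gramSchmidtNormed 𝕜 M.initCols) {M | LinearIndependent 𝕜 M.initCols} :=
    continuousOn_pi.mpr fun k => (continuousOn_gramSchmidtNormed k).comp
      continuous_initCols.continuousOn fun _ hM => hM
  exact continuous_completeLastCol.comp_continuousOn (continuous_ofInitCols.comp_continuousOn hgs)

open scoped ComplexOrder in
theorem mulVec_eq_neg_of_lineMap_one_mulVec_eq_zero {m : Type*} [Fintype m] [DecidableEq m]
    {A : Matrix m m 𝕜} (hA : A ∈ unitaryGroup m 𝕜) {t : ℝ} {v : m → 𝕜}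
    (hv : AffineMap.lineMap A 1 t *ᵥ v = 0) : A *ᵥ v = -v := by
  rcases eq_or_ne v 0 with rfl | hv0
  · simp
  have hAv : (1 - t) • (A *ᵥ v) = -(t • v) := by
    rw [AffineMap.lineMap_apply_module, add_mulVec, smul_mulVec, smul_mulVec, one_mulVec] at hv
    exact eq_neg_of_add_eq_zero_left hv
  have hisom : star (A *ᵥ v) ⬝ᵥ (A *ᵥ v) = star v ⬝ᵥ v := by
    rw [star_mulVec, dotProduct_mulVec, vecMul_vecMul, ← star_eq_conjTranspose,
      mem_unitaryGroup_iff'.mp hA, vecMul_one]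
  have hsq : ((1 - t) * (1 - t)) • (star v ⬝ᵥ v) = (t * t) • (star v ⬝ᵥ v) := by
    have := congrArg (fun w => star w ⬝ᵥ w) hAv
    simpa [star_smul, smul_dotProduct, dotProduct_smul, hisom, smul_smul] using this
  have ht : t = 1 / 2 := by
    have := smul_left_injective ℝ (dotProduct_star_self_eq_zero.not.mpr hv0) hsq
    linarith
  rw [ht, show (1 : ℝ) - 1 / 2 = 1 / 2 by norm_num, ← smul_neg] at hAv
  exact smul_right_injective _ (by norm_num) hAv

theorem linearIndependent_initCols_of_forall_mulVec_eq_zero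
    {M : Matrix (Fin (n + 1)) (Fin (n + 1)) 𝕜}
    (hM : ∀ v, v (Fin.last n) = 0 → M *ᵥ v = 0 → v = 0) : LinearIndependent 𝕜 M.initCols := by
  rw [Fintype.linearIndependent_iff]
  intro g hg k
  let v : Fin (n + 1) → 𝕜 := fun j => Fin.lastCases 0 g j
  have hMv : M *ᵥ v = 0 := by
    ext i
    have := congrArg (fun w : EuclideanSpace 𝕜 (Fin (n + 1)) => w i) hg
    simpa [mulVec, dotProduct, Fin.sum_univ_castSucc, v, initCols, cols, mul_comm] using this
  simpa [v] using congrFun (hM v (by simp [v]) hMv) k.castSucc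

end Matrix

open Matrix

theorem linearIndependent_initCols_lineMap_one_of_eigDim_eq_zero {A : Matrix (Fin 4) (Fin 4) ℂ}
    (hA : A ∈ unitaryGroup (Fin 4) ℂ) (hE : eigDim A = 0) (t : ℝ) :
    LinearIndependent ℂ (AffineMap.lineMap A 1 t).initCols := by
  refine linearIndependent_initCols_of_forall_mulVec_eq_zero fun v hv3 hv => ?_
  have hmem : v ∈ Espace A :=
    ⟨by simp [mulVec_eq_neg_of_lineMap_one_mulVec_eq_zero hA hv], hv3⟩
  rwa [Submodule.finrank_eq_zero.mp hE, Submodule.mem_bot] at hmem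

/-- The inclusion `Y₀ → SU(4)` is homotopic to the constant map at the identity matrix. -/
theorem Y0_inclusion_homotopic_const :
    ContinuousMap.Homotopic
      (⟨fun A : {A : Matrix.specialUnitaryGroup (Fin 4) ℂ //
            eigDim (A : Matrix (Fin 4) (Fin 4) ℂ) = 0} => A.1,
        continuous_subtype_val⟩ :
        C({A : Matrix.specialUnitaryGroup (Fin 4) ℂ //
            eigDim (A : Matrix (Fin 4) (Fin 4) ℂ) = 0},
          Matrix.specialUnitaryGroup (Fin 4) ℂ))
      (ContinuousMap.const _ (1 : Matrix.specialUnitaryGroup (Fin 4) ℂ)) := by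
  have hli : ∀ p : unitInterval × {A : specialUnitaryGroup (Fin 4) ℂ //
      eigDim (A : Matrix (Fin 4) (Fin 4) ℂ) = 0},
      LinearIndependent ℂ (AffineMap.lineMap p.2.1.1 1 (p.1 : ℝ)).initCols :=
    fun p => linearIndependent_initCols_lineMap_one_of_eigDim_eq_zero
      (mem_specialUnitaryGroup_iff.mp p.2.1.2).1 p.2.2 p.1
  refine ⟨{ toFun := fun p => ⟨gramSchmidtCompletion (AffineMap.lineMap p.2.1.1 1 (p.1 : ℝ)),
              gramSchmidtCompletion_mem_specialUnitaryGroup (hli p)⟩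
            continuous_toFun := ?_
            map_zero_left := fun A => ?_
            map_one_left := fun A => ?_ }⟩
  · exact (continuousOn_gramSchmidtCompletion.comp_continuous (by fun_prop) hli).subtype_mk _
  · exact Subtype.ext (by simpa using gramSchmidtCompletion_of_mem_specialUnitaryGroup A.1.2)
  · exact Subtype.ext (by simpa using
      gramSchmidtCompletion_of_mem_specialUnitaryGroup (one_mem (specialUnitaryGroup _ ℂ)))
end

section
/- Let k ∈ {0,1,2,3} and A ∈ SU(4). Then E(A) equals the span of the first k standard basis vectors e₁,…,e_k of ℂ⁴ (the zero subspace when k = 0) if and only if there exists B ∈ SU(4−k) such that: (i) A is the block-diagonal matrix whose upper-left k×k block is −I_k, whose off-diagonal blocks are zero, and whose lower-right (4−k)×(4−k) block is (−1)^k·B; and (ii) the only y ∈ ℂ^{4−k} whose final coordinate is zero and which satisfies B·y = (−1)^{k+1}·y is y = 0. -/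
namespace Matrix

variable {m n R : Type*} [Fintype m] [Fintype n] [CommRing R]

theorem submatrix_mulVec_eq_neg_iff {ι : Type*} [Fintype ι] (A : Matrix ι ι R) (e : m ≃ ι)
    (y : m → R) : A.submatrix e e *ᵥ y = -y ↔ A *ᵥ (y ∘ e.symm) = -(y ∘ e.symm) := by
  rw [submatrix_mulVec_equiv, ← e.symm.surjective.injective_comp_right.eq_iff]
  simp [Function.comp_assoc, Pi.neg_comp]

theorem smul_mulVec_eq_neg_iff {c : R} (hc : c * c = 1) (B : Matrix n n R) (v : n → R) :
    (c • B) *ᵥ v = -v ↔ B *ᵥ v = -(c • v) := by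
  rw [smul_mulVec]
  constructor <;> intro h
  · rw [← one_smul R (B *ᵥ v), ← hc, mul_smul, h, smul_neg]
  · rw [h, smul_neg, smul_smul, hc, one_smul]

variable [DecidableEq m]

theorem fromBlocks_neg_one_mulVec_eq_neg_iff (D : Matrix n n R) (x : m ⊕ n → R) :
    fromBlocks (-1) 0 0 D *ᵥ x = -x ↔ D *ᵥ (x ∘ Sum.inr) = -(x ∘ Sum.inr) := by
  rw [fromBlocks_mulVec, ← Sum.elim_comp_inl_inr (-x), Sum.elim_eq_iff]
  simp [neg_mulVec, Pi.neg_comp]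

variable [DecidableEq n] [StarRing R]

theorem submatrix_mem_specialUnitaryGroup {ι : Type*} [Fintype ι] [DecidableEq ι]
    {A : Matrix ι ι R} (hA : A ∈ specialUnitaryGroup ι R) (e : m ≃ ι) :
    A.submatrix e e ∈ specialUnitaryGroup m R := by
  rw [mem_specialUnitaryGroup_iff, mem_unitaryGroup_iff'] at hA ⊢
  refine ⟨?_, by rw [det_submatrix_equiv_self, hA.2]⟩
  rw [star_eq_conjTranspose, conjTranspose_submatrix, submatrix_mul_equiv,
    ← star_eq_conjTranspose, hA.1, submatrix_one_equiv]

theorem eq_zero_of_fromBlocks_neg_one_mem_unitaryGroup {B : Matrix m n R} {D : Matrix n n R}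
    (h : fromBlocks (-1) B 0 D ∈ unitaryGroup (m ⊕ n) R) : B = 0 := by
  rw [mem_unitaryGroup_iff', star_eq_conjTranspose, fromBlocks_conjTranspose,
    fromBlocks_multiply, ← fromBlocks_one, fromBlocks_inj] at h
  simpa using h.2.1

theorem mem_specialUnitaryGroup_of_fromBlocks_neg_one {B : Matrix n n R}
    (h : fromBlocks (-1 : Matrix m m R) 0 0 ((-1 : R) ^ Fintype.card m • B) ∈
      specialUnitaryGroup (m ⊕ n) R)
    (hcard : Even (Fintype.card m + Fintype.card n)) : B ∈ specialUnitaryGroup n R := by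
  rw [mem_specialUnitaryGroup_iff, mem_unitaryGroup_iff'] at h ⊢
  obtain ⟨hU, hdet⟩ := h
  constructor
  · have hc : (-1 : R) ^ Fintype.card m * (-1) ^ Fintype.card m = 1 := by
      rw [← mul_pow, neg_one_mul, neg_neg, one_pow]
    rw [star_eq_conjTranspose, fromBlocks_conjTranspose, fromBlocks_multiply, ← fromBlocks_one,
      fromBlocks_inj] at hU
    simpa [Matrix.smul_mul, Matrix.mul_smul, smul_smul, hc, star_eq_conjTranspose] using hU.2.2.2
  · have hparity : Even (Fintype.card m + Fintype.card m * Fintype.card n) := by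
      rw [Nat.even_add] at hcard
      rw [Nat.even_add, Nat.even_mul]
      tauto
    rwa [det_fromBlocks_zero₂₁, det_neg, det_one, det_smul, ← mul_assoc, mul_one, ← pow_mul,
      ← pow_add, hparity.neg_one_pow, one_mul] at hdet

theorem forall_mulVec_eq_neg_iff_exists_fromBlocks {M : Matrix (m ⊕ n) (m ⊕ n) R}
    (hM : M ∈ unitaryGroup (m ⊕ n) R) (V : Submodule R (n → R)) :
    (∀ x, M *ᵥ x = -x ∧ x ∘ Sum.inr ∈ V ↔ x ∘ Sum.inr = 0) ↔
      ∃ D, M = fromBlocks (-1) 0 0 D ∧ ∀ v ∈ V, D *ᵥ v = -v → v = 0 := by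
  constructor
  · intro h
    have hcol (i : m) : M *ᵥ Pi.single (Sum.inl i) 1 = -Pi.single (Sum.inl i) 1 :=
      ((h _).2 (by ext; simp)).1
    have h₁₁ : M.toBlocks₁₁ = -1 := by
      ext a i
      simpa [toBlocks₁₁, mulVec_single_one, one_apply, Pi.single_apply] using
        congrFun (hcol i) (.inl a)
    have h₂₁ : M.toBlocks₂₁ = 0 := by
      ext a i
      simpa [toBlocks₂₁, mulVec_single_one] using congrFun (hcol i) (.inr a)
    have hB : M.toBlocks₁₂ = 0 := eq_zero_of_fromBlocks_neg_one_mem_unitaryGroup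
      (D := M.toBlocks₂₂) (by rwa [← h₁₁, ← h₂₁, fromBlocks_toBlocks])
    have hM' : M = fromBlocks (-1) 0 0 M.toBlocks₂₂ := by
      rw [← h₁₁, ← h₂₁, ← hB, fromBlocks_toBlocks]
    refine ⟨_, hM', fun v hv hDv => ?_⟩
    rw [hM'] at h
    simpa using (h (Sum.elim 0 v)).1
      ⟨(fromBlocks_neg_one_mulVec_eq_neg_iff _ _).2 (by simpa using hDv), by simpa using hv⟩
  · rintro ⟨D, rfl, hD⟩ x
    rw [fromBlocks_neg_one_mulVec_eq_neg_iff]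
    exact ⟨fun h => hD _ h.2 h.1, fun h => by simp [h]⟩

theorem exists_fromBlocks_neg_one_iff_exists_smul {k l : ℕ} (hkl : Even (k + l))
    {M : Matrix (Fin k ⊕ Fin l) (Fin k ⊕ Fin l) R} (hM : M ∈ specialUnitaryGroup _ R)
    (V : Submodule R (Fin l → R)) :
    (∃ D, M = fromBlocks (-1) 0 0 D ∧ ∀ v ∈ V, D *ᵥ v = -v → v = 0) ↔
      ∃ B ∈ specialUnitaryGroup (Fin l) R, M = fromBlocks (-1) 0 0 ((-1 : R) ^ k • B) ∧
        ∀ v ∈ V, B *ᵥ v = (-1 : R) ^ (k + 1) • v → v = 0 := by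
  have hc : (-1 : R) ^ k * (-1) ^ k = 1 := by rw [← mul_pow, neg_one_mul, neg_neg, one_pow]
  have hsign : (-1 : R) ^ (k + 1) = -(-1) ^ k := by rw [pow_succ, mul_neg_one]
  simp only [hsign, neg_smul, ← smul_mulVec_eq_neg_iff hc]
  constructor
  · rintro ⟨D, rfl, hD⟩
    have hD' : (-1 : R) ^ k • (-1 : R) ^ k • D = D := by rw [smul_smul, hc, one_smul]
    refine ⟨(-1 : R) ^ k • D,
      mem_specialUnitaryGroup_of_fromBlocks_neg_one (m := Fin k) ?_ (by simpa), by rw [hD'],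
      by rwa [hD']⟩
    rwa [Fintype.card_fin, hD']
  · rintro ⟨B, -, rfl, hB⟩
    exact ⟨_, rfl, hB⟩

end Matrix

open Matrix in
theorem mem_Espace_iff (A : Matrix (Fin 4) (Fin 4) ℂ) (x : Fin 4 → ℂ) :
    x ∈ Espace A ↔ A *ᵥ x = -x ∧ x 3 = 0 := by
  simp [Espace, add_eq_zero_iff_eq_neg]

theorem comp_symm_mem_span_range_single_inl_iff {m n ι R : Type*} [Finite ι] [DecidableEq ι]
    [CommRing R] (e : m ⊕ n ≃ ι) (y : m ⊕ n → R) :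
    y ∘ e.symm ∈ Submodule.span R (Set.range fun i => Pi.single (e (.inl i)) (1 : R)) ↔
      y ∘ Sum.inr = 0 := by
  have hbasis : (Set.range fun i => Pi.single (e (.inl i)) (1 : R)) =
      Pi.basisFun R ι '' Set.range (e ∘ Sum.inl) := by
    rw [← Set.range_comp]
    simp [Function.comp_def]
  rw [hbasis, Module.Basis.mem_span_image, Set.subset_def, funext_iff, e.surjective.forall]
  simp [Pi.basisFun_repr, Sum.forall]

/-- For `k ∈ {0,1,2,3}` and `A ∈ SU(4)`: `E(A)` equals the span of the first `k` standard
basis vectors of `ℂ⁴` if and only if `A` is block diagonal, `A = diag(-I_k, (-1)^k B)` for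
some `B ∈ SU(4-k)` such that the only `y ∈ ℂ^{4-k}` with final coordinate zero and
`B·y = (-1)^{k+1}·y` is `y = 0`. -/
theorem espace_eq_span_iff_block (k : ℕ) (hk : k ≤ 3)
    (A : Matrix.specialUnitaryGroup (Fin 4) ℂ) :
    Espace (A : Matrix (Fin 4) (Fin 4) ℂ) =
      Submodule.span ℂ (Set.range fun i : Fin k =>
        (Pi.single (Fin.castLE (show k ≤ 4 by omega) i) 1 : Fin 4 → ℂ)) ↔
    ∃ B ∈ Matrix.specialUnitaryGroup (Fin (4 - k)) ℂ,
      (A : Matrix (Fin 4) (Fin 4) ℂ) =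
        Matrix.reindex (finSumFinEquiv.trans (finCongr (show k + (4 - k) = 4 by omega)))
          (finSumFinEquiv.trans (finCongr (show k + (4 - k) = 4 by omega)))
          (Matrix.fromBlocks (-1 : Matrix (Fin k) (Fin k) ℂ) 0 0 (((-1 : ℂ) ^ k) • B)) ∧
      ∀ y : Fin (4 - k) → ℂ, y ⟨4 - k - 1, by omega⟩ = 0 →
        B.mulVec y = ((-1 : ℂ) ^ (k + 1)) • y → y = 0 := by
  set e : Fin k ⊕ Fin (4 - k) ≃ Fin 4 := finSumFinEquiv.trans (finCongr (by omega))
  set last : Fin (4 - k) := ⟨4 - k - 1, by omega⟩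
  have hA' := Matrix.submatrix_mem_specialUnitaryGroup A.2 e
  have hcast : (fun i : Fin k => Fin.castLE (show k ≤ 4 by omega) i) = fun i => e (.inl i) := by
    funext i
    exact Fin.ext (by simp [e])
  have hlast : e.symm 3 = .inr last := e.symm_apply_eq.2 (Fin.ext (by simp [e, last]; omega))
  have hlast_mem (x : Fin k ⊕ Fin (4 - k) → ℂ) :
      (x ∘ e.symm) 3 = 0 ↔ x ∘ Sum.inr ∈ LinearMap.ker (LinearMap.proj (R := ℂ) last) := by
    rw [Function.comp_apply, hlast]
    rfl
  have hreindex (N : Matrix (Fin k ⊕ Fin (4 - k)) (Fin k ⊕ Fin (4 - k)) ℂ) :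
      (A : Matrix (Fin 4) (Fin 4) ℂ) = Matrix.reindex e e N ↔
        (A : Matrix (Fin 4) (Fin 4) ℂ).submatrix e e = N := by
    rw [← (Matrix.reindex e e).symm_apply_eq]
    rfl
  rw [SetLike.ext_iff, e.symm.injective.surjective_comp_right.forall]
  simp only [mem_Espace_iff, ← Matrix.submatrix_mulVec_eq_neg_iff, hlast_mem, hcast,
    comp_symm_mem_span_range_single_inl_iff]
  rw [Matrix.forall_mulVec_eq_neg_iff_exists_fromBlocks
      (Matrix.mem_specialUnitaryGroup_iff.1 hA').1,
    Matrix.exists_fromBlocks_neg_one_iff_exists_smul ⟨2, by omega⟩ hA']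
  simp only [hreindex, LinearMap.mem_ker, LinearMap.proj_apply]
end
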